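/- arXiv:0709.2153 — 2 statements merged into one kernel-verified Lean document; each statement's English description precedes it below -/
import Mathlib

section
/- Let a_1,...,a_n be distinct elements of a field K. The (i,j)-entry of the inverse of the Vandermonde matrix V_n (with (V_n)_{ij} = a_i^{j-1}) is given by c_{i,j} = (-1)^{n-i} σ̄^{a_j}(n-i) / ∏_{k ≠ j} (a_j - a_k), where σ̄^{a_j}(t) is the t-th elementary symmetric polynomial in the a_k with k ≠ j. -/
/-!
Multiplying `V_n` by the coefficient vector of a polynomial of degree `< n` evaluates it at the
nodes `a_i`. Hence the `j`-th column of `V_n⁻¹` is the coefficient vector of the Lagrange basis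
polynomial `L_j = ∏_{k ≠ j} (X - a_k) / ∏_{k ≠ j} (a_j - a_k)`, which takes the value `δ_{ij}`
at `a_i`, and Vieta's formulas give the coefficients of its numerator.
-/

/-- The `t`-th elementary symmetric polynomial of the `a k` for `k ≠ j`. -/
def esymErase {n : ℕ} {K : Type*} [Field K] (a : Fin n → K) (j : Fin n) (t : ℕ) : K :=
  ∑ u ∈ (Finset.univ.erase j).powersetCard t, ∏ i ∈ u, a i

open Polynomial Finset

namespace Lagrange

theorem coeff_nodal {R ι : Type*} [CommRing R] (s : Finset ι) (v : ι → R) {k : ℕ}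
    (hk : k ≤ #s) :
    (nodal s v).coeff k = (-1) ^ (#s - k) * ∑ u ∈ s.powersetCard (#s - k), ∏ l ∈ u, v l := by
  have hprod : nodal s v = ((s.val.map v).map fun t => X - C t).prod := by
    rw [Multiset.map_map]; rfl
  rw [hprod, Multiset.prod_X_sub_C_coeff _ (by simpa using hk), Multiset.card_map,
    esymm_map_val]
  rfl

variable {F ι : Type*} [Field F] [DecidableEq ι] {s : Finset ι} {v : ι → F} {i : ι}

theorem basis_eq_C_nodalWeight_mul_nodal_erase (hi : i ∈ s) :
    Lagrange.basis s v i = C (nodalWeight s v i) * nodal (s.erase i) v := by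
  rw [basis_eq_prod_sub_inv_mul_nodal_div hi, nodal_erase_eq_nodal_div hi]

theorem coeff_basis (hi : i ∈ s) {k : ℕ} (hk : k ≤ #s - 1) :
    (Lagrange.basis s v i).coeff k =
      (-1) ^ (#s - 1 - k) * (∑ u ∈ (s.erase i).powersetCard (#s - 1 - k), ∏ l ∈ u, v l) /
        ∏ l ∈ s.erase i, (v i - v l) := by
  rw [basis_eq_C_nodalWeight_mul_nodal_erase hi, coeff_C_mul, ← card_erase_of_mem hi,
    coeff_nodal _ _ (by rwa [card_erase_of_mem hi]), nodalWeight, prod_inv_distrib,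
    div_eq_inv_mul]

end Lagrange

namespace Matrix

theorem vandermonde_mul_of_coeff {R : Type*} [CommRing R] {n : ℕ} (v : Fin n → R)
    (p : Fin n → R[X]) (hp : ∀ j, (p j).natDegree < n) :
    vandermonde v * of (fun i j : Fin n => (p j).coeff i) = of fun i j => (p j).eval (v i) := by
  ext i j
  rw [mul_apply, of_apply, eval_eq_sum_range' (hp j), ← Fin.sum_univ_eq_sum_range]
  simp only [vandermonde_apply, of_apply, mul_comm]

theorem inv_vandermonde {F : Type*} [Field F] {n : ℕ} {v : Fin n → F}
    (hv : Function.Injective v) :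
    (vandermonde v)⁻¹ = of fun i j : Fin n => (Lagrange.basis univ v j).coeff i := by
  refine inv_eq_right_inv ?_
  rw [vandermonde_mul_of_coeff]
  · ext i j
    rcases eq_or_ne j i with rfl | hji
    · simp [Lagrange.eval_basis_self hv.injOn (mem_univ _)]
    · simp [Lagrange.eval_basis_of_ne hji (mem_univ i), one_apply_ne hji.symm]
  · intro j
    rw [Lagrange.natDegree_basis hv.injOn (mem_univ j), card_fin]
    exact Nat.sub_lt (Fin.pos j) one_pos

end Matrix

theorem stmt5 {n : ℕ} {K : Type*} [Field K] (a : Fin n → K) (ha : Function.Injective a)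
    (i j : Fin n) :
    (Matrix.of fun i j : Fin n => a i ^ (j : ℕ))⁻¹ i j =
      (-1 : K) ^ (n - 1 - (i : ℕ)) * esymErase a j (n - 1 - (i : ℕ)) /
        ∏ k ∈ Finset.univ.erase j, (a j - a k) := by
  rw [← Matrix.vandermonde, Matrix.inv_vandermonde ha, Matrix.of_apply,
    Lagrange.coeff_basis (mem_univ j) (by rw [card_fin]; omega), card_fin]
  rfl
end

section
/- Let 1 ≤ p ≤ n and a_1,...,a_p be distinct elements of a field K, and let σ(t) denote the t-th elementary symmetric polynomial in a_1,...,a_p. Define v_1 = ((-1)^p σ(p), (-1)^{p-1} σ(p-1), ..., -σ(1), 1, 0, ..., 0) ∈ K^n and let v_2,...,v_{n-p} be its successive cyclic shifts to the right by one position. Then v_1,...,v_{n-p} form a basis of the kernel of the p×n Vandermonde matrix V_{p,n} with entries a_i^{j-1}. -/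
/-!
The vector `v_m` is the coefficient vector of `X ^ m * ∏ i, (X - a_i)` (Vieta), and multiplying a
coefficient vector by the Vandermonde matrix evaluates the polynomial at the `a_i`, so every `v_m`
lies in the kernel. The `v_m` are linearly independent since `v_m` has its last nonzero entry in
position `m + p`. The `p` leading columns of `V_{p,n}` form an invertible square Vandermonde
matrix, so `V_{p,n}` has rank `p` and its kernel has dimension `n - p`, the number of the `v_m`.
-/

/-- The `t`-th elementary symmetric polynomial of `a_1, …, a_p`. -/
def esym {p : ℕ} {K : Type*} [Field K] (a : Fin p → K) (t : ℕ) : K :=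
  ∑ u ∈ (Finset.univ : Finset (Fin p)).powersetCard t, ∏ i ∈ u, a i

open Polynomial

section

variable {K : Type*} [Field K]

theorem coeff_prod_X_sub_C_of_le {p : ℕ} (a : Fin p → K) {k : ℕ} (hk : k ≤ p) :
    (∏ i, (X - C (a i))).coeff k = (-1) ^ (p - k) * esym a (p - k) := by
  have hcard : Multiset.card (Finset.univ.val.map a) = p := by simp
  rw [Finset.prod, ← Function.comp_def (X - C ·) a, ← Multiset.map_map,
    Multiset.prod_X_sub_C_coeff _ (hcard.symm ▸ hk), hcard, Finset.esymm_map_val]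
  rfl

theorem coeff_X_pow_mul_prod_X_sub_C {p : ℕ} (a : Fin p → K) (m j : ℕ) :
    (X ^ m * ∏ i, (X - C (a i))).coeff j =
      if m ≤ j ∧ j ≤ m + p then (-1) ^ (p - (j - m)) * esym a (p - (j - m)) else 0 := by
  rw [coeff_X_pow_mul']
  by_cases hmj : m ≤ j
  · rw [if_pos hmj]
    by_cases hjp : j ≤ m + p
    · rw [if_pos ⟨hmj, hjp⟩, coeff_prod_X_sub_C_of_le a (by omega)]
    · rw [if_neg (by omega), coeff_eq_zero_of_natDegree_lt (by
      rw [natDegree_finsetProd_X_sub_C_eq_card, Finset.card_univ, Fintype.card_fin]; omega)]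
  · rw [if_neg hmj, if_neg (by omega)]

theorem mulVec_pow_coeff_eq_eval {ι R : Type*} [CommRing R] (a : ι → R) {n : ℕ} {f : R[X]}
    (hf : f.natDegree < n) :
    (Matrix.of fun i (j : Fin n) => a i ^ (j : ℕ)).mulVec (fun j => f.coeff j) =
      fun i => f.eval (a i) := by
  funext i
  rw [eval_eq_sum_range' hf, Matrix.mulVec, dotProduct,
    ← Fin.sum_univ_eq_sum_range (fun j => f.coeff j * a i ^ j)]
  simp only [Matrix.of_apply, mul_comm]

theorem linearIndependent_of_apply_eq_zero_of_lt {ι α : Type*} [Fintype ι] [LinearOrder ι]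
    (v : ι → α → K) (g : ι → α) (hdiag : ∀ i, v i (g i) ≠ 0)
    (hlt : ∀ i j, i < j → v i (g j) = 0) : LinearIndependent K v := by
  classical
  let M : Matrix ι ι K := .of fun i j => v i (g j)
  have hM : IsUnit M := by
    rw [Matrix.isUnit_iff_isUnit_det, Matrix.det_of_isLowerTriangular M fun i j h => hlt i j h]
    exact (Finset.prod_ne_zero_iff.mpr fun i _ => hdiag i).isUnit
  exact LinearIndependent.of_comp (LinearMap.funLeft K K g)
    (Matrix.linearIndependent_rows_iff_isUnit.mpr hM)

theorem linearIndependent_coeff_X_pow_mul {P : K[X]} (hP : P ≠ 0) {k n : ℕ}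
    (hkn : k + P.natDegree ≤ n) :
    LinearIndependent K fun (m : Fin k) (j : Fin n) => (X ^ (m : ℕ) * P).coeff j := by
  refine linearIndependent_of_apply_eq_zero_of_lt _
    (fun m => ⟨m + P.natDegree, by omega⟩) (fun m => ?_) (fun m m' hmm' => ?_)
  · simpa [coeff_X_pow_mul'] using hP
  · have hlt : (m : ℕ) < m' := hmm'
    change (X ^ (m : ℕ) * P).coeff (m' + P.natDegree) = 0
    rw [coeff_X_pow_mul', if_pos (by omega)]
    exact coeff_eq_zero_of_natDegree_lt (by omega)

theorem surjective_mulVecLin_of_pow {p n : ℕ} (hpn : p ≤ n) {a : Fin p → K}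
    (ha : Function.Injective a) :
    Function.Surjective (Matrix.of fun i (j : Fin n) => a i ^ (j : ℕ)).mulVecLin := by
  have hvdm : LinearMap.range (Matrix.vandermonde a).mulVecLin = ⊤ := by
    rw [LinearMap.range_eq_top]
    refine Matrix.mulVec_surjective_iff_isUnit.mpr ?_
    rw [Matrix.isUnit_iff_isUnit_det, isUnit_iff_ne_zero]
    exact Matrix.det_vandermonde_ne_zero_iff.mpr ha
  rw [← LinearMap.range_eq_top, eq_top_iff, ← hvdm, Matrix.range_mulVecLin,
    Matrix.range_mulVecLin]
  refine Submodule.span_mono (Set.range_subset_iff.mpr fun t => ⟨Fin.castLE hpn t, ?_⟩)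
  ext i
  simp [Matrix.vandermonde_apply]

theorem finrank_ker_mulVecLin_of_pow {p n : ℕ} (hpn : p ≤ n) {a : Fin p → K}
    (ha : Function.Injective a) :
    Module.finrank K (LinearMap.ker (Matrix.of fun i (j : Fin n) => a i ^ (j : ℕ)).mulVecLin) =
      n - p := by
  have hrank := LinearMap.finrank_range_add_finrank_ker
    (Matrix.of fun i (j : Fin n) => a i ^ (j : ℕ)).mulVecLin
  rw [LinearMap.range_eq_top.mpr (surjective_mulVecLin_of_pow hpn ha), finrank_top] at hrank
  simp only [Module.finrank_fin_fun] at hrank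
  omega

end

theorem stmt11_general {p n : ℕ} (hpn : p ≤ n) {K : Type*} [Field K]
    (a : Fin p → K) (ha : Function.Injective a)
    (v : Fin (n - p) → Fin n → K)
    (hv : ∀ m j, v m j =
      if (m : ℕ) ≤ (j : ℕ) ∧ (j : ℕ) ≤ (m : ℕ) + p then
        (-1 : K) ^ (p - ((j : ℕ) - (m : ℕ))) * esym a (p - ((j : ℕ) - (m : ℕ)))
      else 0) :
    LinearIndependent K v ∧
      Submodule.span K (Set.range v) =
        LinearMap.ker (Matrix.of fun (i : Fin p) (j : Fin n) => a i ^ (j : ℕ)).mulVecLin := by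
  set P : K[X] := ∏ i, (X - C (a i))
  have hP0 : P ≠ 0 := (monic_prod_X_sub_C a _).ne_zero
  have hPdeg : P.natDegree = p := by simp [P]
  obtain rfl : v = fun m j => (X ^ (m : ℕ) * P).coeff j := by
    ext m j; rw [hv, coeff_X_pow_mul_prod_X_sub_C]
  have hindep : LinearIndependent K
      fun (m : Fin (n - p)) (j : Fin n) => (X ^ (m : ℕ) * P).coeff j :=
    linearIndependent_coeff_X_pow_mul hP0 (by omega)
  have hker : ∀ m : Fin (n - p), (fun j : Fin n => (X ^ (m : ℕ) * P).coeff j) ∈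
      LinearMap.ker (Matrix.of fun (i : Fin p) (j : Fin n) => a i ^ (j : ℕ)).mulVecLin := by
    intro m
    rw [LinearMap.mem_ker, Matrix.mulVecLin_apply,
      mulVec_pow_coeff_eq_eval _ (by rw [natDegree_X_pow_mul _ hP0]; omega)]
    funext i
    simp [P, eval_prod, Finset.prod_eq_zero (Finset.mem_univ i)]
  refine ⟨hindep, Submodule.eq_of_le_of_finrank_le
    (Submodule.span_le.mpr (Set.range_subset_iff.mpr hker)) ?_⟩
  rw [finrank_ker_mulVecLin_of_pow hpn ha, finrank_span_eq_card hindep, Fintype.card_fin]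

theorem stmt11 {p n : ℕ} (hp : 1 ≤ p) (hpn : p ≤ n) {K : Type*} [Field K]
    (a : Fin p → K) (ha : Function.Injective a)
    (v : Fin (n - p) → Fin n → K)
    (hv : ∀ m j, v m j =
      if (m : ℕ) ≤ (j : ℕ) ∧ (j : ℕ) ≤ (m : ℕ) + p then
        (-1 : K) ^ (p - ((j : ℕ) - (m : ℕ))) * esym a (p - ((j : ℕ) - (m : ℕ)))
      else 0) :
    LinearIndependent K v ∧
      Submodule.span K (Set.range v) =
        LinearMap.ker (Matrix.of fun (i : Fin p) (j : Fin n) => a i ^ (j : ℕ)).mulVecLin :=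
  stmt11_general hpn a ha v hv
end
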